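/- Let u ∈ ℂ^d, let κ ∈ G, let v¹, v², v³ ∈ ℂ^d and δ¹, δ², δ³ ∈ 𝔤, and set Δ^j = κ★(Ξ_u δ^j)★κ⁻¹ − (ξ_{v^j} κ)★κ⁻¹ for j = 1,2,3 (κ⁻¹ being the ★-inverse of κ). Then [(v¹,Δ¹),(v²,Δ²)] = (v³,Δ³) if and only if [(v¹,δ¹),(v²,δ²)] = (v³,δ³). -/

import Mathlib

open scoped BigOperators

/-- Convolution product on `ℂ^W`: `(δ★δ′)_w = Σ_{w=w₁w₂} δ_{w₁} δ′_{w₂}`. -/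
noncomputable def conv {A : Type*} (x y : List A → ℂ) : List A → ℂ :=
  fun w => ∑ i ∈ Finset.range (w.length + 1), x (w.take i) * y (w.drop i)

/-- Shuffle product of two words, as a multiset of words. -/
def shuffle {A : Type*} : List A → List A → Multiset (List A)
  | [], w => {w}
  | w, [] => {w}
  | a :: u, b :: v =>
      ((shuffle u (b :: v)).map (a :: ·)) + ((shuffle (a :: u) v).map (b :: ·))

/-- Membership in the group `G`: the shuffle relations with `γ_∅ = 1`. -/
def isGrp {A : Type*} (γ : List A → ℂ) : Prop :=
  γ [] = 1 ∧ ∀ w w' : List A, γ w * γ w' = ((shuffle w w').map γ).sum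

/-- Membership in the Lie algebra `𝔤`. -/
def isLie {A : Type*} (β : List A → ℂ) : Prop :=
  β [] = 0 ∧ ∀ w w' : List A, w ≠ [] → w' ≠ [] → ((shuffle w w').map β).sum = 0

/-- The unit `1` of the convolution product. -/
def unitCW {A : Type*} : List A → ℂ := fun w => match w with | [] => 1 | _ => 0

/-- `ν^v_ℓ = Σ_j v_j ν_{j,ℓ}` for a letter `ℓ`. -/
noncomputable def nuL {A : Type*} {d : ℕ} (ν : Fin d → A → ℂ) (v : Fin d → ℂ) (ℓ : A) : ℂ :=
  ∑ j, v j * ν j ℓ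

/-- `ν^v_w = ν^v_{ℓ₁} + ⋯ + ν^v_{ℓ_n}` for a word `w = ℓ₁⋯ℓ_n`. -/
noncomputable def nuW {A : Type*} {d : ℕ} (ν : Fin d → A → ℂ) (v : Fin d → ℂ) (w : List A) : ℂ :=
  (w.map (nuL ν v)).sum

/-- The operator `Ξ_v`: `(Ξ_v δ)_w = exp(ν^v_w) δ_w`. -/
noncomputable def XiOp {A : Type*} {d : ℕ} (ν : Fin d → A → ℂ) (v : Fin d → ℂ)
    (δ : List A → ℂ) : List A → ℂ :=
  fun w => Complex.exp (nuW ν v w) * δ w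

/-- The operator `ξ_v`: `(ξ_v δ)_w = ν^v_w δ_w`. -/
noncomputable def xiOp {A : Type*} {d : ℕ} (ν : Fin d → A → ℂ) (v : Fin d → ℂ)
    (δ : List A → ℂ) : List A → ℂ :=
  fun w => nuW ν v w * δ w

/-- The bracket `[(v,β),(u,η)] = (0, ξ_v η − ξ_u β + (β★η − η★β))` on `ℂ^d × ℂ^W`. -/
noncomputable def brkExt {A : Type*} {d : ℕ} (ν : Fin d → A → ℂ)
    (p q : (Fin d → ℂ) × (List A → ℂ)) : (Fin d → ℂ) × (List A → ℂ) :=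
  (0, xiOp ν p.1 q.2 - xiOp ν q.1 p.2 + (conv p.2 q.2 - conv q.2 p.2))

/-!
Since `ν^v_w` is additive under concatenation, `ξ_v` is a derivation of the convolution ring
`(ℂ^W, ★)` and `Ξ_u` is a ring automorphism commuting with every `ξ_v`. The second component of
the bracket is the curvature `D₁e₂ − D₂e₁ + [e₁, e₂]` of the pair of derivations `D_j = ξ_{v^j}`,
and `Δ^j` is the gauge transform of `Ξ_u δ^j` by `κ`. As in gauge theory, curvature transforms by
conjugation, `F(Δ¹, Δ²) = κ Ξ_u(F(δ¹, δ²)) κ⁻¹`; the first components force `v³ = 0`, so that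
`Δ³ = κ Ξ_u(δ³) κ⁻¹`, and the injective map `x ↦ κ Ξ_u(x) κ⁻¹` turns one relation into the other.
-/

section Gauge
variable {R : Type*} [Ring R]

def IsLeibniz (D : R →+ R) : Prop := ∀ x y, D (x * y) = D x * y + x * D y

theorem IsLeibniz.map_one {D : R →+ R} (hD : IsLeibniz D) : D 1 = 0 := by
  simpa using hD 1 1

theorem IsLeibniz.map_units_inv {D : R →+ R} (hD : IsLeibniz D) (K : Rˣ) :
    D ↑K⁻¹ = -(↑K⁻¹ * D K * ↑K⁻¹) := by
  have h : D ↑K⁻¹ * K + ↑K⁻¹ * D K = 0 := by rw [← hD, K.inv_mul, hD.map_one]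
  calc D ↑K⁻¹ = (D ↑K⁻¹ * K + ↑K⁻¹ * D K) * ↑K⁻¹ - ↑K⁻¹ * D K * ↑K⁻¹ := by
        rw [add_mul, mul_assoc, K.mul_inv]; noncomm_ring
    _ = -(↑K⁻¹ * D K * ↑K⁻¹) := by rw [h]; noncomm_ring

def gaugeTransform (K : Rˣ) (D : R →+ R) (e : R) : R := K * e * ↑K⁻¹ - D K * ↑K⁻¹

def curvature (D₁ D₂ : R →+ R) (e₁ e₂ : R) : R := D₁ e₂ - D₂ e₁ + ⁅e₁, e₂⁆

theorem IsLeibniz.map_conj {D : R →+ R} (hD : IsLeibniz D) (K : Rˣ) (e : R) :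
    D (K * e * ↑K⁻¹) = K * D e * ↑K⁻¹ + ⁅D K * ↑K⁻¹, K * e * ↑K⁻¹⁆ := by
  rw [hD, hD, hD.map_units_inv, Ring.lie_def]
  simp only [mul_assoc, K.inv_mul_cancel_left]
  noncomm_ring

/-- Maurer–Cartan: the gauge transform of `0` by `K` is flat, because `D₁` and `D₂` commute
on `K`. -/
theorem IsLeibniz.sub_map_logDeriv {D₁ D₂ : R →+ R} (hD₁ : IsLeibniz D₁) (hD₂ : IsLeibniz D₂)
    (K : Rˣ) (hcomm : D₁ (D₂ K) = D₂ (D₁ K)) :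
    D₁ (D₂ K * ↑K⁻¹) - D₂ (D₁ K * ↑K⁻¹) = ⁅D₁ K * ↑K⁻¹, D₂ K * ↑K⁻¹⁆ := by
  rw [hD₁, hD₂, hD₁.map_units_inv, hD₂.map_units_inv, hcomm, Ring.lie_def]
  noncomm_ring

theorem curvature_gaugeTransform {D₁ D₂ : R →+ R} (hD₁ : IsLeibniz D₁) (hD₂ : IsLeibniz D₂)
    (hcomm : ∀ x, D₁ (D₂ x) = D₂ (D₁ x)) (K : Rˣ) (e₁ e₂ : R) :
    curvature D₁ D₂ (gaugeTransform K D₁ e₁) (gaugeTransform K D₂ e₂)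
      = K * curvature D₁ D₂ e₁ e₂ * ↑K⁻¹ := by
  have hflat := eq_add_of_sub_eq (hD₁.sub_map_logDeriv hD₂ K (hcomm K))
  simp only [curvature, gaugeTransform, map_sub, hD₁.map_conj, hD₂.map_conj, hflat]
  simp only [Ring.lie_def, sub_mul, mul_sub, add_mul, mul_add, mul_assoc, K.inv_mul_cancel_left]
  noncomm_ring

theorem gaugeTransform_zero (K : Rˣ) (e : R) : gaugeTransform K 0 e = K * e * ↑K⁻¹ := by
  simp [gaugeTransform]

theorem map_curvature {S : Type*} [Ring S] (f : R →+* S) {D₁ D₂ : R →+ R} {D₁' D₂' : S →+ S}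
    (h₁ : ∀ x, f (D₁ x) = D₁' (f x)) (h₂ : ∀ x, f (D₂ x) = D₂' (f x)) (e₁ e₂ : R) :
    f (curvature D₁ D₂ e₁ e₂) = curvature D₁' D₂' (f e₁) (f e₂) := by
  simp only [curvature, Ring.lie_def, map_add, map_sub, map_mul, h₁, h₂]

theorem curvature_gaugeTransform_map_eq_iff {S : Type*} [Ring S] {f : R →+* S}
    (hf : Function.Injective f) {D₁ D₂ : R →+ R} {D₁' D₂' : S →+ S} (hD₁' : IsLeibniz D₁')
    (hD₂' : IsLeibniz D₂') (hcomm : ∀ x, D₁' (D₂' x) = D₂' (D₁' x))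
    (h₁ : ∀ x, f (D₁ x) = D₁' (f x)) (h₂ : ∀ x, f (D₂ x) = D₂' (f x)) (K : Sˣ) (e₁ e₂ e₃ : R) :
    curvature D₁' D₂' (gaugeTransform K D₁' (f e₁)) (gaugeTransform K D₂' (f e₂))
      = K * f e₃ * ↑K⁻¹ ↔ curvature D₁ D₂ e₁ e₂ = e₃ := by
  rw [curvature_gaugeTransform hD₁' hD₂' hcomm, ← map_curvature f h₁ h₂, Units.mul_left_inj,
    Units.mul_right_inj, hf.eq_iff]

end Gauge

section Convolution
variable {A : Type*}

theorem conv_nil (x y : List A → ℂ) : conv x y [] = x [] * y [] := by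
  simp [conv]

theorem conv_cons (x y : List A → ℂ) (a : A) (w : List A) :
    conv x y (a :: w) = x [] * y (a :: w) + conv (fun t => x (a :: t)) y w := by
  rw [conv, List.length_cons, Finset.sum_range_succ']
  simp [conv, add_comm]

theorem conv_assoc (x y z : List A → ℂ) : conv (conv x y) z = conv x (conv y z) := by
  funext w
  induction w generalizing x with
  | nil => simp only [conv_nil]; ring
  | cons a w ih =>
    have hxy : (fun t => conv x y (a :: t))
        = fun t => x [] * y (a :: t) + conv (fun s => x (a :: s)) y t := by
      funext t; rw [conv_cons]
    have hsplit : conv (fun t => x [] * y (a :: t) + conv (fun s => x (a :: s)) y t) z w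
        = x [] * conv (fun t => y (a :: t)) z w + conv (conv (fun s => x (a :: s)) y) z w := by
      simp [conv, add_mul, Finset.sum_add_distrib, Finset.mul_sum, mul_assoc]
    rw [conv_cons, conv_cons, conv_cons, conv_nil, hxy, hsplit, ih]
    ring

theorem conv_unitCW_left (x : List A → ℂ) : conv unitCW x = x := by
  funext w
  cases w with
  | nil => simp [conv_nil, unitCW]
  | cons a w => simp [conv, Finset.sum_range_succ', unitCW]

theorem conv_unitCW_right (x : List A → ℂ) : conv x unitCW = x := by
  funext w
  induction w generalizing x with
  | nil => simp [conv_nil, unitCW]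
  | cons a w ih => simp [conv_cons, ih, unitCW]

theorem conv_add_left (x y z : List A → ℂ) : conv (x + y) z = conv x z + conv y z := by
  funext w; simp [conv, add_mul, Finset.sum_add_distrib]

theorem conv_add_right (x y z : List A → ℂ) : conv x (y + z) = conv x y + conv x z := by
  funext w; simp [conv, mul_add, Finset.sum_add_distrib]

theorem conv_zero_left (x : List A → ℂ) : conv 0 x = 0 := by
  funext w; simp [conv]

theorem conv_zero_right (x : List A → ℂ) : conv x 0 = 0 := by
  funext w; simp [conv]

end Convolution

/-- `ℂ^W` with the convolution product; a type synonym, since `List A → ℂ` already carries the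
pointwise ring structure. -/
def CW (A : Type*) : Type _ := List A → ℂ

namespace CW
variable {A : Type*}

instance : AddCommGroup (CW A) := inferInstanceAs (AddCommGroup (List A → ℂ))

noncomputable instance : Ring (CW A) where
  mul := conv
  one := unitCW
  mul_assoc := conv_assoc
  one_mul := conv_unitCW_left
  mul_one := conv_unitCW_right
  left_distrib := conv_add_right
  right_distrib := conv_add_left
  zero_mul := conv_zero_left
  mul_zero := conv_zero_right

def diag (f : List A → ℂ) : CW A →+ CW A where
  toFun x w := f w * x w
  map_zero' := funext fun _ => mul_zero _
  map_add' _ _ := funext fun _ => mul_add _ _ _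

@[simp]
theorem diag_apply (f : List A → ℂ) (x : CW A) (w : List A) : diag f x w = f w * x w := rfl

theorem diag_comm (f g : List A → ℂ) (x : CW A) : diag f (diag g x) = diag g (diag f x) :=
  funext fun _ => mul_left_comm _ _ _

theorem diag_zero : diag (0 : List A → ℂ) = 0 :=
  AddMonoidHom.ext fun _ => funext fun _ => zero_mul _

theorem diag_injective {f : List A → ℂ} (hf : ∀ w, f w ≠ 0) : Function.Injective (diag f) :=
  fun _ _ h => funext fun w => mul_left_cancel₀ (hf w) (congrFun h w)

theorem isLeibniz_diag {ω : List A → ℂ} (hω : ∀ w₁ w₂, ω (w₁ ++ w₂) = ω w₁ + ω w₂) :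
    IsLeibniz (diag ω) := by
  intro x y
  funext w
  show ω w * conv x y w = conv (diag ω x) y w + conv x (diag ω y) w
  simp only [conv, Finset.mul_sum, ← Finset.sum_add_distrib]
  refine Finset.sum_congr rfl fun i _ => ?_
  have hsplit := hω (w.take i) (w.drop i)
  rw [List.take_append_drop] at hsplit
  rw [diag_apply, diag_apply, hsplit]
  ring

def diagRingHom (χ : List A → ℂ) (h_nil : χ [] = 1)
    (h_append : ∀ w₁ w₂, χ (w₁ ++ w₂) = χ w₁ * χ w₂) : CW A →+* CW A where
  __ := diag χ
  map_one' := by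
    funext w
    cases w with
    | nil => exact (mul_one _).trans h_nil
    | cons a w => exact mul_zero _
  map_mul' x y := by
    funext w
    show χ w * conv x y w = conv (diag χ x) (diag χ y) w
    simp only [conv, Finset.mul_sum]
    refine Finset.sum_congr rfl fun i _ => ?_
    have hsplit := h_append (w.take i) (w.drop i)
    rw [List.take_append_drop] at hsplit
    rw [diag_apply, diag_apply, hsplit]
    ring

end CW

section Weights
variable {A : Type*} {d : ℕ} (ν : Fin d → A → ℂ)

theorem nuW_append (v : Fin d → ℂ) (w₁ w₂ : List A) :
    nuW ν v (w₁ ++ w₂) = nuW ν v w₁ + nuW ν v w₂ := by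
  simp [nuW]

theorem nuW_zero : nuW ν (0 : Fin d → ℂ) = 0 := by
  have h : nuL ν (0 : Fin d → ℂ) = fun _ => 0 := funext fun _ => by simp [nuL]
  funext w
  simp [nuW, h]

end Weights

theorem stmt11_general {A : Type*} {d : ℕ} (ν : Fin d → A → ℂ)
    (u : Fin d → ℂ) (κ κinv : List A → ℂ)
    (hκinv₁ : conv κ κinv = unitCW) (hκinv₂ : conv κinv κ = unitCW)
    (v₁ v₂ v₃ : Fin d → ℂ) (δ₁ δ₂ δ₃ : List A → ℂ)
    (Δ₁ Δ₂ Δ₃ : List A → ℂ)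
    (hΔ₁ : Δ₁ = conv (conv κ (XiOp ν u δ₁)) κinv - conv (xiOp ν v₁ κ) κinv)
    (hΔ₂ : Δ₂ = conv (conv κ (XiOp ν u δ₂)) κinv - conv (xiOp ν v₂ κ) κinv)
    (hΔ₃ : Δ₃ = conv (conv κ (XiOp ν u δ₃)) κinv - conv (xiOp ν v₃ κ) κinv) :
    brkExt ν (v₁, Δ₁) (v₂, Δ₂) = (v₃, Δ₃) ↔ brkExt ν (v₁, δ₁) (v₂, δ₂) = (v₃, δ₃) := by
  let K : (CW A)ˣ := ⟨κ, κinv, hκinv₁, hκinv₂⟩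
  let ξ (v : Fin d → ℂ) : CW A →+ CW A := CW.diag (nuW ν v)
  let Ξ : CW A →+* CW A := CW.diagRingHom (fun w => Complex.exp (nuW ν u w))
    (by simp [nuW]) (fun w₁ w₂ => by simp only [nuW_append, Complex.exp_add])
  have hξ (v : Fin d → ℂ) : IsLeibniz (ξ v) := CW.isLeibniz_diag (nuW_append ν v)
  have hΞ : Function.Injective Ξ := CW.diag_injective fun _ => Complex.exp_ne_zero _
  subst hΔ₁ hΔ₂ hΔ₃
  rw [Prod.ext_iff, Prod.ext_iff]
  show 0 = v₃ ∧ curvature (ξ v₁) (ξ v₂) (gaugeTransform K (ξ v₁) (Ξ δ₁))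
      (gaugeTransform K (ξ v₂) (Ξ δ₂)) = gaugeTransform K (ξ v₃) (Ξ δ₃) ↔
    0 = v₃ ∧ curvature (ξ v₁) (ξ v₂) δ₁ δ₂ = δ₃
  refine and_congr_right fun hv₃ => ?_
  subst hv₃
  have hξΞ (v : Fin d → ℂ) (x : CW A) : Ξ (ξ v x) = ξ v (Ξ x) := CW.diag_comm _ _ x
  have hξ₀ : ξ 0 = 0 := (congrArg CW.diag (nuW_zero ν)).trans CW.diag_zero
  rw [hξ₀, gaugeTransform_zero]
  exact curvature_gaugeTransform_map_eq_iff hΞ (hξ v₁) (hξ v₂) (CW.diag_comm _ _) (hξΞ v₁)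
    (hξΞ v₂) K δ₁ δ₂ δ₃

/-- invariance of the extended bracket under change of variables.
With `Δ^j = κ★(Ξ_u δ^j)★κ⁻¹ − (ξ_{v^j} κ)★κ⁻¹`, one has
`[(v¹,Δ¹),(v²,Δ²)] = (v³,Δ³)` iff `[(v¹,δ¹),(v²,δ²)] = (v³,δ³)`. -/
theorem stmt11 {A : Type*} [Countable A] {d : ℕ} (hd : 1 ≤ d) (ν : Fin d → A → ℂ)
    (u : Fin d → ℂ) (κ κinv : List A → ℂ) (hκ : isGrp κ)
    (hκinv₁ : conv κ κinv = unitCW) (hκinv₂ : conv κinv κ = unitCW)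
    (v₁ v₂ v₃ : Fin d → ℂ) (δ₁ δ₂ δ₃ : List A → ℂ)
    (hδ₁ : isLie δ₁) (hδ₂ : isLie δ₂) (hδ₃ : isLie δ₃)
    (Δ₁ Δ₂ Δ₃ : List A → ℂ)
    (hΔ₁ : Δ₁ = conv (conv κ (XiOp ν u δ₁)) κinv - conv (xiOp ν v₁ κ) κinv)
    (hΔ₂ : Δ₂ = conv (conv κ (XiOp ν u δ₂)) κinv - conv (xiOp ν v₂ κ) κinv)
    (hΔ₃ : Δ₃ = conv (conv κ (XiOp ν u δ₃)) κinv - conv (xiOp ν v₃ κ) κinv) :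
    brkExt ν (v₁, Δ₁) (v₂, Δ₂) = (v₃, Δ₃) ↔ brkExt ν (v₁, δ₁) (v₂, δ₂) = (v₃, δ₃) :=
  stmt11_general ν u κ κinv hκinv₁ hκinv₂ v₁ v₂ v₃ δ₁ δ₂ δ₃ Δ₁ Δ₂ Δ₃ hΔ₁ hΔ₂ hΔ₃
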